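/- arXiv:2306.06290 — 2 statements merged into one kernel-verified Lean document; each statement's English description precedes it below -/
import Mathlib

section
/- Koebe distortion for maps of nonnegative Schwarzian derivative: for each δ > 0 there exists K > 0 such that if I₀ ⊂ I are bounded open intervals with both components of I \ I₀ having length at least δ·|I₀|, and g : I → ℝ is a C³ diffeomorphism onto its image with Schwarzian derivative Sg ≥ 0 on I, then |g'(x)|/|g'(y)| ≤ K for all x, y ∈ I₀. -/
open Set

/-- The Schwarzian derivative `Sg = g'''/g' - (3/2)(g''/g')²`. -/
noncomputable def schwarzian (g : ℝ → ℝ) (x : ℝ) : ℝ :=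
  iteratedDeriv 3 g x / deriv g x - (3 / 2) * (iteratedDeriv 2 g x / deriv g x) ^ 2

lemma same_sign {a b : ℝ} {f : ℝ → ℝ} (hcont : ContinuousOn f (Ioo a b))
    (hne : ∀ x ∈ Ioo a b, f x ≠ 0) {m : ℝ} (hm : m ∈ Ioo a b) (hfm : 0 < f m) :
    ∀ z ∈ Ioo a b, 0 < f z := by
  intro z hz
  by_contra hle
  push_neg at hle
  have hzlt : f z < 0 := lt_of_le_of_ne hle (hne z hz)
  have hsub : uIcc z m ⊆ Ioo a b := (ordConnected_Ioo).uIcc_subset hz hm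
  have h0 : (0 : ℝ) ∈ uIcc (f z) (f m) :=
    Icc_subset_uIcc ⟨le_of_lt hzlt, le_of_lt hfm⟩
  obtain ⟨c, hc, hc0⟩ := intermediate_value_uIcc (hcont.mono hsub) h0
  exact hne c (hsub hc) hc0

lemma concave_ratio {a b a₀ b₀ δ : ℝ} (hδ : 0 < δ) (h1 : a < a₀) (h2 : a₀ < b₀) (h3 : b₀ < b)
    (hma : δ * (b₀ - a₀) ≤ a₀ - a) (hmb : δ * (b₀ - a₀) ≤ b - b₀)
    {u : ℝ → ℝ} (hu : ConcaveOn ℝ (Ioo a b) u) (hupos : ∀ z ∈ Ioo a b, 0 < u z)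
    {x y : ℝ} (hx : x ∈ Ioo a₀ b₀) (hy : y ∈ Ioo a₀ b₀) :
    u x ≤ ((1 + δ) / δ) * u y := by
  have hL : 0 < b₀ - a₀ := by linarith [hx.1, hx.2]
  have hdL : 0 < δ * (b₀ - a₀) := by positivity
  obtain ⟨hx1, hx2⟩ := hx
  obtain ⟨hy1, hy2⟩ := hy
  have hxI : x ∈ Ioo a b := ⟨by linarith, by linarith⟩
  have hyI : y ∈ Ioo a b := ⟨by linarith, by linarith⟩
  rcases lt_trichotomy x y with h | h | h
  · -- x < y, use right endpoint c = y + δL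
    set c := y + δ * (b₀ - a₀) with hc
    have hcI : c ∈ Ioo a b := ⟨by simp only [hc]; linarith, by simp only [hc]; linarith⟩
    have hden : 0 < c - x := by simp only [hc]; linarith
    have hcy : c - y = δ * (b₀ - a₀) := by simp only [hc]; ring
    set t := (c - y) / (c - x) with htd
    set s := (y - x) / (c - x) with hsd
    have ht : 0 < t := div_pos (by linarith) hden
    have hs : 0 ≤ s := div_nonneg (by linarith) hden.le
    have hts : t + s = 1 := by
      rw [htd, hsd, ← add_div, div_eq_one_iff_eq hden.ne']; ring
    have hcomb : t * x + s * c = y := by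
      rw [htd, hsd, div_mul_eq_mul_div, div_mul_eq_mul_div, ← add_div,
        div_eq_iff hden.ne']; ring
    have hkey := hu.2 hxI hcI ht.le hs hts
    simp only [smul_eq_mul] at hkey
    rw [hcomb] at hkey
    have hsc : 0 ≤ s * u c := mul_nonneg hs (hupos c hcI).le
    have h4 : t * u x ≤ u y := by linarith
    have h5 : t * (c - x) = δ * (b₀ - a₀) := by
      rw [htd, div_mul_cancel₀ _ hden.ne', hcy]
    have h6 : δ * (b₀ - a₀) * u x ≤ u y * (c - x) := by
      calc δ * (b₀ - a₀) * u x = (t * u x) * (c - x) := by rw [← h5]; ring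
        _ ≤ u y * (c - x) := mul_le_mul_of_nonneg_right h4 hden.le
    have h7 : c - x ≤ (1 + δ) * (b₀ - a₀) := by simp only [hc]; nlinarith
    have h8 : u y * (c - x) ≤ u y * ((1 + δ) * (b₀ - a₀)) :=
      mul_le_mul_of_nonneg_left h7 (hupos y hyI).le
    rw [div_mul_eq_mul_div, le_div_iff₀ hδ]
    nlinarith
  · -- x = y
    subst h
    have := hupos x hxI
    rw [div_mul_eq_mul_div, le_div_iff₀ hδ]
    nlinarith
  · -- y < x, use left endpoint c = y - δL
    set c := y - δ * (b₀ - a₀) with hc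
    have hcI : c ∈ Ioo a b := ⟨by simp only [hc]; linarith, by simp only [hc]; linarith⟩
    have hden : 0 < x - c := by simp only [hc]; linarith
    have hcy : y - c = δ * (b₀ - a₀) := by simp only [hc]; ring
    set t := (x - y) / (x - c) with htd
    set s := (y - c) / (x - c) with hsd
    have hs : 0 < s := div_pos (by linarith) hden
    have ht : 0 ≤ t := div_nonneg (by linarith) hden.le
    have hts : t + s = 1 := by
      rw [htd, hsd, ← add_div, div_eq_one_iff_eq hden.ne']; ring
    have hcomb : t * c + s * x = y := by
      rw [htd, hsd, div_mul_eq_mul_div, div_mul_eq_mul_div, ← add_div,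
        div_eq_iff hden.ne']; ring
    have hkey := hu.2 hcI hxI ht hs.le hts
    simp only [smul_eq_mul] at hkey
    rw [hcomb] at hkey
    have htc : 0 ≤ t * u c := mul_nonneg ht (hupos c hcI).le
    have h4 : s * u x ≤ u y := by linarith
    have h5 : s * (x - c) = δ * (b₀ - a₀) := by
      rw [hsd, div_mul_cancel₀ _ hden.ne', hcy]
    have h6 : δ * (b₀ - a₀) * u x ≤ u y * (x - c) := by
      calc δ * (b₀ - a₀) * u x = (s * u x) * (x - c) := by rw [← h5]; ring
        _ ≤ u y * (x - c) := mul_le_mul_of_nonneg_right h4 hden.le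
    have h7 : x - c ≤ (1 + δ) * (b₀ - a₀) := by simp only [hc]; nlinarith
    have h8 : u y * (x - c) ≤ u y * ((1 + δ) * (b₀ - a₀)) :=
      mul_le_mul_of_nonneg_left h7 (hupos y hyI).le
    rw [div_mul_eq_mul_div, le_div_iff₀ hδ]
    nlinarith

lemma koebe_pos (δ : ℝ) (hδ : 0 < δ) (a a₀ b₀ b : ℝ) (g : ℝ → ℝ)
    (h1 : a < a₀) (h2 : a₀ < b₀) (h3 : b₀ < b)
    (hma : δ * (b₀ - a₀) ≤ a₀ - a) (hmb : δ * (b₀ - a₀) ≤ b - b₀)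
    (hg : ContDiffOn ℝ 3 g (Ioo a b))
    (hpos : ∀ x ∈ Ioo a b, 0 < deriv g x)
    (hs : ∀ x ∈ Ioo a b, 0 ≤ schwarzian g x) :
    ∀ x ∈ Ioo a₀ b₀, ∀ y ∈ Ioo a₀ b₀,
      |deriv g x| / |deriv g y| ≤ ((1 + δ) / δ) ^ 2 := by
  have hIopen : IsOpen (Ioo a b) := isOpen_Ioo
  have hp2 : ContDiffOn ℝ 2 (deriv g) (Ioo a b) :=
    hg.deriv_of_isOpen hIopen (by norm_num)
  have hq1 : ContDiffOn ℝ 1 (deriv (deriv g)) (Ioo a b) :=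
    hp2.deriv_of_isOpen hIopen (by norm_num)
  have hd : ∀ f : ℝ → ℝ, ContDiffOn ℝ 1 f (Ioo a b) →
      ∀ z ∈ Ioo a b, HasDerivAt f (deriv f z) z := by
    intro f hf z hz
    exact (((hf.differentiableOn one_ne_zero) z hz).differentiableAt
      (hIopen.mem_nhds hz)).hasDerivAt
  have hP : ∀ z ∈ Ioo a b, HasDerivAt (deriv g) (deriv (deriv g) z) z :=
    hd _ (hp2.of_le (by norm_num))
  have hQ : ∀ z ∈ Ioo a b, HasDerivAt (deriv (deriv g)) (deriv (deriv (deriv g)) z) z :=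
    hd _ hq1
  set u : ℝ → ℝ := fun z => deriv g z ^ (-2⁻¹ : ℝ) with hu_def
  set v : ℝ → ℝ := fun z =>
    deriv (deriv g) z * (-2⁻¹) * deriv g z ^ ((-2⁻¹ : ℝ) - 1) with hv_def
  set w : ℝ → ℝ := fun z =>
    deriv (deriv (deriv g)) z * (-2⁻¹) * deriv g z ^ ((-2⁻¹ : ℝ) - 1)
      + deriv (deriv g) z * (-2⁻¹) *
        (deriv (deriv g) z * ((-2⁻¹ : ℝ) - 1) * deriv g z ^ ((-2⁻¹ : ℝ) - 1 - 1)) with hw_def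
  have hU : ∀ z ∈ Ioo a b, HasDerivAt u (v z) z := by
    intro z hz
    exact (hP z hz).rpow_const (Or.inl (hpos z hz).ne')
  have hV : ∀ z ∈ Ioo a b, HasDerivAt v (w z) z := by
    intro z hz
    exact ((hQ z hz).mul_const (-2⁻¹)).mul ((hP z hz).rpow_const (Or.inl (hpos z hz).ne'))
  have hW0 : ∀ z ∈ Ioo a b, w z ≤ 0 := by
    intro z hz
    have hp : 0 < deriv g z := hpos z hz
    have hS := hs z hz
    have h3eq : iteratedDeriv 3 g z = deriv (deriv (deriv g)) z := by
      rw [iteratedDeriv_eq_iterate]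
      simp [Function.iterate_succ, Function.iterate_zero]
    have h2eq : iteratedDeriv 2 g z = deriv (deriv g) z := by
      rw [iteratedDeriv_eq_iterate]
      simp [Function.iterate_succ, Function.iterate_zero]
    rw [schwarzian, h3eq, h2eq] at hS
    set P := deriv g z
    set Q := deriv (deriv g) z
    set R := deriv (deriv (deriv g)) z
    have key : 3 / 2 * Q ^ 2 ≤ R * P := by
      have h5 := mul_nonneg hS (sq_nonneg P)
      have e3 : (R / P - 3 / 2 * (Q / P) ^ 2) * P ^ 2 = R * P - 3 / 2 * Q ^ 2 := by
        field_simp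
      rw [e3] at h5
      linarith
    have hA : 0 < P ^ ((-2⁻¹ : ℝ) - 1 - 1) := Real.rpow_pos_of_pos hp _
    have hE : P ^ ((-2⁻¹ : ℝ) - 1) = P ^ ((-2⁻¹ : ℝ) - 1 - 1) * P := by
      rw [← Real.rpow_add_one hp.ne']
      congr 1
      ring
    show R * (-2⁻¹) * P ^ ((-2⁻¹ : ℝ) - 1)
      + Q * (-2⁻¹) * (Q * ((-2⁻¹ : ℝ) - 1) * P ^ ((-2⁻¹ : ℝ) - 1 - 1)) ≤ 0
    rw [hE]
    nlinarith [mul_nonneg hA.le (sub_nonneg.2 key)]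
  have hucont : ContinuousOn u (Ioo a b) := fun z hz =>
    ((hU z hz).continuousAt).continuousWithinAt
  have hint : interior (Ioo a b) = Ioo a b := hIopen.interior_eq
  have hconc : ConcaveOn ℝ (Ioo a b) u := by
    refine concaveOn_of_hasDerivWithinAt2_nonpos (f' := v) (f'' := w) (convex_Ioo a b) hucont
      (fun z hz => ?_) (fun z hz => ?_) (fun z hz => ?_)
    · rw [hint] at hz; exact (hU z hz).hasDerivWithinAt
    · rw [hint] at hz; exact (hV z hz).hasDerivWithinAt
    · rw [hint] at hz; exact hW0 z hz
  have hupos : ∀ z ∈ Ioo a b, 0 < u z := fun z hz =>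
    Real.rpow_pos_of_pos (hpos z hz) _
  have hsq : ∀ z ∈ Ioo a b, u z ^ 2 = (deriv g z)⁻¹ := by
    intro z hz
    have hp := hpos z hz
    rw [hu_def]
    simp only
    rw [sq, ← Real.rpow_add hp]
    norm_num [Real.rpow_neg_one]
  intro x hx y hy
  have hxI : x ∈ Ioo a b := ⟨by linarith [hx.1], by linarith [hx.2]⟩
  have hyI : y ∈ Ioo a b := ⟨by linarith [hy.1], by linarith [hy.2]⟩
  have hle : u y ≤ ((1 + δ) / δ) * u x :=
    concave_ratio hδ h1 h2 h3 hma hmb hconc hupos hy hx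
  have hpx := hpos x hxI
  have hpy := hpos y hyI
  have hux := hupos x hxI
  have huy := hupos y hyI
  rw [abs_of_pos hpx, abs_of_pos hpy]
  have hsq2 : u y ^ 2 ≤ ((1 + δ) / δ) ^ 2 * u x ^ 2 := by nlinarith
  have heq : deriv g x / deriv g y = u y ^ 2 / u x ^ 2 := by
    rw [hsq x hxI, hsq y hyI, inv_div_inv]
  rw [heq, div_le_iff₀ (by positivity)]
  nlinarith

/-- Koebe distortion principle for maps of nonnegative Schwarzian derivative: for each
`δ > 0` there is `K > 0` such that whenever `I₀ = (a₀,b₀) ⊂ I = (a,b)` with both components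
of `I \ I₀` of length at least `δ·|I₀|`, and `g` is a `C³` diffeomorphism of `I` onto its
image with `Sg ≥ 0` on `I`, then `|g'(x)|/|g'(y)| ≤ K` for all `x, y ∈ I₀`. -/
theorem koebe_distortion_nonneg_schwarzian (δ : ℝ) (hδ : 0 < δ) :
    ∃ K > 0, ∀ a a₀ b₀ b : ℝ, ∀ g : ℝ → ℝ,
      a < a₀ → a₀ < b₀ → b₀ < b →
      δ * (b₀ - a₀) ≤ a₀ - a → δ * (b₀ - a₀) ≤ b - b₀ →
      ContDiffOn ℝ 3 g (Ioo a b) →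
      InjOn g (Ioo a b) →
      (∀ x ∈ Ioo a b, deriv g x ≠ 0) →
      (∀ x ∈ Ioo a b, 0 ≤ schwarzian g x) →
      ∀ x ∈ Ioo a₀ b₀, ∀ y ∈ Ioo a₀ b₀, |deriv g x| / |deriv g y| ≤ K := by
  refine ⟨((1 + δ) / δ) ^ 2, by positivity, ?_⟩
  intro a a₀ b₀ b g h1 h2 h3 hma hmb hg hinj hne hs x hx y hy
  have hIopen : IsOpen (Ioo a b) := isOpen_Ioo
  have hm : (a₀ + b₀) / 2 ∈ Ioo a b := ⟨by linarith, by linarith⟩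
  have hcont : ContinuousOn (deriv g) (Ioo a b) :=
    hg.continuousOn_deriv_of_isOpen hIopen (by norm_num)
  rcases lt_or_gt_of_ne (hne _ hm) with hneg | hposd
  · -- derivative negative; apply to -g
    set G : ℝ → ℝ := fun z => -g z with hG_def
    have hderG : ∀ z, deriv G z = -deriv g z := fun z => deriv.neg
    have hGc : ContDiffOn ℝ 3 G (Ioo a b) := hg.neg
    have hallneg : ∀ z ∈ Ioo a b, 0 < -deriv g z := by
      refine same_sign (hcont.neg) (fun z hz => neg_ne_zero.2 (hne z hz)) hm ?_
      linarith
    have hGpos : ∀ z ∈ Ioo a b, 0 < deriv G z := by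
      intro z hz; rw [hderG]; exact hallneg z hz
    have hGS : ∀ z ∈ Ioo a b, 0 ≤ schwarzian G z := by
      intro z hz
      have : schwarzian G z = schwarzian g z := by
        rw [schwarzian, schwarzian, hG_def]
        rw [iteratedDeriv_fun_neg, iteratedDeriv_fun_neg, deriv.fun_neg, neg_div_neg_eq, neg_div_neg_eq]
      rw [this]; exact hs z hz
    have := koebe_pos δ hδ a a₀ b₀ b G h1 h2 h3 hma hmb hGc hGpos hGS x hx y hy
    rwa [hderG, hderG, abs_neg, abs_neg] at this
  · have hall : ∀ z ∈ Ioo a b, 0 < deriv g z := same_sign hcont hne hm hposd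
    exact koebe_pos δ hδ a a₀ b₀ b g h1 h2 h3 hma hmb hg hall hs x hx y hy
end

section
/- A real polynomial with all critical points real and of even local degree, restricted to an interval where its derivative is nonvanishing, has negative Schwarzian derivative. More simply: if f is a real polynomial of degree ≥ 2 all of whose critical points are real, then Sf(x) < 0 for every real x with f'(x) ≠ 0. -/
open Polynomial

/-- iterated derivative of polynomial evaluation -/
lemma iteratedDeriv_polyEval (p : Polynomial ℝ) (n : ℕ) :
    iteratedDeriv n (fun t => p.eval t) = fun x => ((derivative)^[n] p).eval x := by
  induction n with
  | zero => simp
  | succ n ih =>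
    rw [iteratedDeriv_succ, ih, Function.iterate_succ_apply']
    funext x
    exact Polynomial.deriv _

lemma step_lemma (q : Polynomial ℝ) (r x S Q : ℝ) (hu : x - r ≠ 0)
    (h1 : (derivative q).eval x = q.eval x * S)
    (h2 : (derivative (derivative q)).eval x = q.eval x * (S ^ 2 - Q)) :
    (derivative ((X - C r) * q)).eval x = ((X - C r) * q).eval x * ((x - r)⁻¹ + S) ∧
      (derivative (derivative ((X - C r) * q))).eval x
        = ((X - C r) * q).eval x * (((x - r)⁻¹ + S) ^ 2 - (((x - r)⁻¹) ^ 2 + Q)) := by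
  have hd : derivative ((X - C r) * q) = q + (X - C r) * derivative q := by
    rw [derivative_mul]; simp
  have hdd : derivative (derivative ((X - C r) * q))
      = 2 * derivative q + (X - C r) * derivative (derivative q) := by
    rw [hd, derivative_add, derivative_mul]; simp; ring
  constructor
  · rw [hd]; simp only [eval_add, eval_mul, eval_sub, eval_X, eval_C, h1]
    field_simp
  · rw [hdd]
    simp only [eval_add, eval_mul, eval_sub, eval_X, eval_C, eval_ofNat, h1, h2]
    field_simp; ring

lemma key_lemma (x a : ℝ) (s : Multiset ℝ) (hs : ∀ r ∈ s, x - r ≠ 0) :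
    (derivative (C a * (s.map (fun r => X - C r)).prod)).eval x
      = (C a * (s.map (fun r => X - C r)).prod).eval x * (s.map (fun r => (x - r)⁻¹)).sum
    ∧ (derivative (derivative (C a * (s.map (fun r => X - C r)).prod))).eval x
      = (C a * (s.map (fun r => X - C r)).prod).eval x *
          ((s.map (fun r => (x - r)⁻¹)).sum ^ 2 - (s.map (fun r => ((x - r)⁻¹) ^ 2)).sum) := by
  induction s using Multiset.induction with
  | empty => simp
  | cons r s ih =>
    have hu : x - r ≠ 0 := hs r (Multiset.mem_cons_self r s)
    have hs' : ∀ r' ∈ s, x - r' ≠ 0 := fun r' hr' => hs r' (Multiset.mem_cons_of_mem hr')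
    obtain ⟨ih1, ih2⟩ := ih hs'
    have hq : C a * ((r ::ₘ s).map (fun r => X - C r)).prod
        = (X - C r) * (C a * (s.map (fun r => X - C r)).prod) := by
      rw [Multiset.map_cons, Multiset.prod_cons]; ring
    obtain ⟨g1, g2⟩ := step_lemma (C a * (s.map (fun r => X - C r)).prod) r x
      ((s.map (fun r => (x - r)⁻¹)).sum) ((s.map (fun r => ((x - r)⁻¹) ^ 2)).sum) hu ih1 ih2
    rw [hq]
    simp only [Multiset.map_cons, Multiset.sum_cons]
    exact ⟨g1, g2⟩

/-- Singer's observation: a real polynomial of degree ≥ 2 all of whose critical points are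
real (i.e. every complex root of its derivative is real) has negative Schwarzian derivative
at every real point where its derivative does not vanish. -/
theorem real_polynomial_neg_schwarzian (p : Polynomial ℝ)
    (hdeg : 2 ≤ p.natDegree)
    (hcrit : ∀ z : ℂ, (p.map (algebraMap ℝ ℂ)).derivative.IsRoot z → z.im = 0) :
    ∀ x : ℝ, p.derivative.eval x ≠ 0 → schwarzian (fun t => p.eval t) x < 0 := by
  intro x hx
  set q := p.derivative with hqdef
  -- q is nonzero of positive degree
  have hpdeg : 0 < p.natDegree := by omega
  have hqd : q.degree = (p.natDegree - 1 : ℕ) := degree_derivative_eq p hpdeg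
  have hq0 : q ≠ 0 := by
    intro h
    rw [h, degree_zero] at hqd
    exact (by simp at hqd)
  have hqnd : q.natDegree = p.natDegree - 1 := natDegree_eq_of_degree_eq_some hqd
  -- complex factorization
  set Q : Polynomial ℂ := q.map (algebraMap ℝ ℂ) with hQdef
  have hQeq : Q = (p.map (algebraMap ℝ ℂ)).derivative := (derivative_map p _).symm
  have hQ0 : Q ≠ 0 := by
    simpa [hQdef] using (Polynomial.map_ne_zero_iff (algebraMap ℝ ℂ).injective).mpr hq0
  have hsplits : Splits Q := IsAlgClosed.splits Q
  have hfact : Q = C Q.leadingCoeff * (Q.roots.map (fun a => X - C a)).prod :=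
    hsplits.eq_prod_roots
  -- every root of Q is real
  have hroots_real : ∀ z ∈ Q.roots, z.im = 0 := by
    intro z hz
    exact hcrit z (by rw [← hQeq]; exact isRoot_of_mem_roots hz)
  set s : Multiset ℝ := Q.roots.map Complex.re with hsdef
  -- Q factors through ℝ
  have hmap : (Q.roots.map (fun a => X - C a))
      = s.map (fun r => Polynomial.map (algebraMap ℝ ℂ) (X - C r)) := by
    rw [hsdef, Multiset.map_map]
    apply Multiset.map_congr rfl
    intro z hz
    have him := hroots_real z hz
    have hre : (algebraMap ℝ ℂ) z.re = z := Complex.ext (by simp) (by simp [him])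
    simp only [Function.comp_apply]
    rw [Polynomial.map_sub, map_X, map_C, hre]
  have hlead : Q.leadingCoeff = algebraMap ℝ ℂ q.leadingCoeff := leadingCoeff_map _
  have hfactR : q = C q.leadingCoeff * (s.map (fun r => X - C r)).prod := by
    apply Polynomial.map_injective (algebraMap ℝ ℂ) (algebraMap ℝ ℂ).injective
    rw [Polynomial.map_mul, map_C, ← hlead, Polynomial.map_multiset_prod, Multiset.map_map]
    simp only [Function.comp_def]
    rw [← hmap]
    exact hfact
  -- s is nonempty
  have hcard : Multiset.card Q.roots = q.natDegree := by
    rw [← natDegree_map_eq_of_injective (algebraMap ℝ ℂ).injective q]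
    exact (splits_iff_card_roots.mp hsplits)
  have hsne : s ≠ 0 := by
    intro h
    have hc : Multiset.card Q.roots = 0 := by
      simpa [hsdef] using congrArg Multiset.card h
    rw [hcard, hqnd] at hc
    omega
  have hne : ∀ r ∈ s, x - r ≠ 0 := by
    intro r hr hzero
    rw [hsdef] at hr
    obtain ⟨z, hz, rfl⟩ := Multiset.mem_map.mp hr
    have him := hroots_real z hz
    have hzeq : (algebraMap ℝ ℂ) x = z :=
      Complex.ext (by simp [(sub_eq_zero.mp hzero)]) (by simp [him])
    have hroot : Q.eval z = 0 := isRoot_of_mem_roots hz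
    rw [← hzeq, hQdef, eval_map, eval₂_at_apply] at hroot
    exact hx ((_root_.map_eq_zero (algebraMap ℝ ℂ)).mp hroot)
  obtain ⟨h1, h2⟩ := key_lemma x q.leadingCoeff s hne
  rw [← hfactR] at h1 h2
  set S : ℝ := (s.map (fun r => (x - r)⁻¹)).sum with hS
  set T : ℝ := (s.map (fun r => ((x - r)⁻¹) ^ 2)).sum with hT
  have hTpos : 0 < T := by
    obtain ⟨r, hr⟩ := Multiset.exists_mem_of_ne_zero hsne
    obtain ⟨t, ht⟩ := Multiset.exists_cons_of_mem hr
    have hrest : 0 ≤ (t.map (fun r => ((x - r)⁻¹) ^ 2)).sum := by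
      apply Multiset.sum_nonneg
      intro y hy
      obtain ⟨r', _, rfl⟩ := Multiset.mem_map.mp hy
      positivity
    have hterm : 0 < ((x - r)⁻¹) ^ 2 := by
      have := hne r hr
      positivity
    rw [hT, ht, Multiset.map_cons, Multiset.sum_cons]
    linarith
  have e1 : deriv (fun t => p.eval t) x = q.eval x := Polynomial.deriv p
  have e2 : iteratedDeriv 2 (fun t => p.eval t) x = (derivative q).eval x := by
    rw [iteratedDeriv_polyEval]
    simp [hqdef, Function.iterate_succ_apply']
  have e3 : iteratedDeriv 3 (fun t => p.eval t) x = (derivative (derivative q)).eval x := by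
    rw [iteratedDeriv_polyEval]
    simp [hqdef, Function.iterate_succ_apply']
  rw [schwarzian, e1, e2, e3, h1, h2]
  have hcalc : (q.eval x * (S ^ 2 - T)) / q.eval x
      - 3 / 2 * ((q.eval x * S) / q.eval x) ^ 2 = -(T + S ^ 2 / 2) := by
    field_simp
    ring
  rw [hcalc]
  nlinarith [sq_nonneg S]
end
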